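/- Let X, Y0, Y1 be finite nonempty sets and Φ ⊆ X×X. Let A0 : X → D(Y0) and A1 : Y0 × X → D(Y1) be mechanisms, and define their sequential composition with shared input (A1 ∘ A0) : X → D(Y1) by (A1 ∘ A0)(x)[R] = ∑_{y0 ∈ Y0} A0(x)[y0]·A1(y0,x)[R]. If A0 provides (ε0,δ0)-distribution privacy with respect to Φ#, and for every y0 ∈ Y0 the mechanism x ↦ A1(y0,x) provides (ε1,δ1)-distribution privacy with respect to Φ#, then A1 ∘ A0 provides (ε0+ε1, (δ0+δ1)·|Φ|)-distribution privacy with respect to Φ#. -/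
import Mathlib


/-!
Common definitions: probability distributions on finite sets, mechanisms,
liftings, couplings, lifted relations, Wasserstein metric, privacy notions.
-/

/-- `l` is a probability distribution on the finite set `X`. -/
def IsDist {X : Type*} [Fintype X] (l : X → ℝ) : Prop :=
  (∀ x, 0 ≤ l x) ∧ ∑ x, l x = 1

/-- `A` is a mechanism from `X` to `Y`: each `A x` is a distribution on `Y`. -/
def IsMech {X Y : Type*} [Fintype X] [Fintype Y] (A : X → Y → ℝ) : Prop :=
  ∀ x, IsDist (A x)

/-- Probability that a distribution `μ` assigns to a set `R`. -/
def probOf {Y : Type*} (μ : Y → ℝ) (R : Finset Y) : ℝ := ∑ y ∈ R, μ y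

/-- The lifting `A#` of a mechanism `A`, applied to an input distribution `l`. -/
def liftDist {X Y : Type*} [Fintype X] (A : X → Y → ℝ) (l : X → ℝ) : Y → ℝ :=
  fun y => ∑ x, l x * A x y

/-- `γ` is a coupling of `l0` and `l1`. -/
def IsCoupling {X : Type*} [Fintype X] (γ : X × X → ℝ) (l0 l1 : X → ℝ) : Prop :=
  IsDist γ ∧ (∀ x0, l0 x0 = ∑ x1, γ (x0, x1)) ∧ (∀ x1, l1 x1 = ∑ x0, γ (x0, x1))

/-- The lifted relation `Φ#` on distributions. -/
def liftRel {X : Type*} [Fintype X] (Φ : Finset (X × X)) (l0 l1 : X → ℝ) : Prop :=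
  IsDist l0 ∧ IsDist l1 ∧ ∃ γ, IsCoupling γ l0 l1 ∧ ∀ p, 0 < γ p → p ∈ Φ

/-- The largest move `max_{(x0,x1) ∈ supp γ} d x0 x1` of a coupling `γ`. -/
noncomputable def maxCost {X : Type*} (d : X → X → ℝ) (γ : X × X → ℝ) : ℝ :=
  sSup {r | ∃ p : X × X, 0 < γ p ∧ r = d p.1 p.2}

/-- The ∞-Wasserstein metric w.r.t. `d`. -/
noncomputable def Winf {X : Type*} [Fintype X] (d : X → X → ℝ) (l0 l1 : X → ℝ) : ℝ :=
  sInf {r | ∃ γ, IsCoupling γ l0 l1 ∧ maxCost d γ = r}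

/-- The relation `Φ#∞`: pairs of distributions admitting a coupling supported in `Φ`
that attains the ∞-Wasserstein metric. -/
def liftRelInf {X : Type*} [Fintype X] (d : X → X → ℝ) (Φ : Finset (X × X))
    (l0 l1 : X → ℝ) : Prop :=
  IsDist l0 ∧ IsDist l1 ∧
    ∃ γ, IsCoupling γ l0 l1 ∧ (∀ p, 0 < γ p → p ∈ Φ) ∧ maxCost d γ = Winf d l0 l1

/-- `d` is a metric on `X`. -/
structure IsMetric {X : Type*} (d : X → X → ℝ) : Prop where
  nonneg : ∀ x y, 0 ≤ d x y
  eq_zero_iff : ∀ x y, d x y = 0 ↔ x = y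
  symm : ∀ x y, d x y = d y x
  triangle : ∀ x y z, d x z ≤ d x y + d y z

/-- `(ε,δ)`-differential privacy of `A` w.r.t. the adjacency relation `Φ`. -/
def DP {X Y : Type*} (A : X → Y → ℝ) (Φ : Finset (X × X)) (ε δ : ℝ) : Prop :=
  ∀ p ∈ Φ, ∀ R : Finset Y, probOf (A p.1) R ≤ Real.exp ε * probOf (A p.2) R + δ

/-- `(ε,d,δ)`-extended differential privacy of `A` w.r.t. `Φ`. -/
def XDP {X Y : Type*} (A : X → Y → ℝ) (Φ : Finset (X × X)) (ε : ℝ)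
    (d : X → X → ℝ) (δ : ℝ) : Prop :=
  ∀ p ∈ Φ, ∀ R : Finset Y,
    probOf (A p.1) R ≤ Real.exp (ε * d p.1 p.2) * probOf (A p.2) R + δ

/-- `(ε,δ)`-distribution privacy of `M` w.r.t. a relation `Ψ` on distributions. -/
def DistP {X Z : Type*} [Fintype X] (M : X → Z → ℝ)
    (Ψ : (X → ℝ) → (X → ℝ) → Prop) (ε δ : ℝ) : Prop :=
  ∀ l0 l1, Ψ l0 l1 → ∀ R : Finset Z,
    probOf (liftDist M l0) R ≤ Real.exp ε * probOf (liftDist M l1) R + δ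

/-- `(ε,D,δ)`-extended distribution privacy of `M` w.r.t. `Ψ`. -/
def XDistP {X Z : Type*} [Fintype X] (M : X → Z → ℝ)
    (Ψ : (X → ℝ) → (X → ℝ) → Prop) (ε : ℝ) (D : (X → ℝ) → (X → ℝ) → ℝ) (δ : ℝ) : Prop :=
  ∀ l0 l1, Ψ l0 l1 → ∀ R : Finset Z,
    probOf (liftDist M l0) R ≤ Real.exp (ε * D l0 l1) * probOf (liftDist M l1) R + δ

/-- `(ε,δ)`-probabilistic distribution privacy of `M` w.r.t. `Ψ`. -/
def pDistP {X Z : Type*} [Fintype X] [DecidableEq Z] (M : X → Z → ℝ)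
    (Ψ : (X → ℝ) → (X → ℝ) → Prop) (ε δ : ℝ) : Prop :=
  ∀ l0 l1, Ψ l0 l1 → ∃ R' : Finset Z,
    probOf (liftDist M l0) R' ≤ δ ∧ probOf (liftDist M l1) R' ≤ δ ∧
    ∀ R : Finset Z,
      probOf (liftDist M l0) (R \ R') ≤ Real.exp ε * probOf (liftDist M l1) (R \ R') ∧
      probOf (liftDist M l1) (R \ R') ≤ Real.exp ε * probOf (liftDist M l0) (R \ R')

/-- The uniform distribution on a finite set `Y`. -/
noncomputable def uniformDist (Y : Type*) [Fintype Y] : Y → ℝ :=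
  fun _ => (Fintype.card Y : ℝ)⁻¹

/-- The `(k,ν,A)`-tupling mechanism from `X` to `Y^(k+1)`. -/
noncomputable def tupling {X Y : Type*} [Fintype Y] (k : ℕ) (ν : Y → ℝ) (A : X → Y → ℝ) :
    X → (Fin (k + 1) → Y) → ℝ :=
  fun x yb => ((k : ℝ) + 1)⁻¹ *
    ∑ i : Fin (k + 1), A x (yb i) * ∏ j ∈ Finset.univ.erase i, ν (yb j)

/-- The set of distributions `Λ_{β,η,A}`. -/
def Lam {X Y : Type*} [Fintype X] [Fintype Y] (β η : ℝ) (A : X → Y → ℝ)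
    (l : X → ℝ) : Prop :=
  IsDist l ∧ (1 - η) * (Fintype.card Y : ℝ) ≤ ({y : Y | liftDist A l y ≤ β}.ncard : ℝ)

/-- The product distribution `λ0 × λ1` on `X × X`. -/
def prodDist {X : Type*} (l0 l1 : X → ℝ) : X × X → ℝ := fun p => l0 p.1 * l1 p.2

/-- Sequential composition with shared input. -/
def compShared {X Y0 Y1 : Type*} [Fintype Y0] (A0 : X → Y0 → ℝ)
    (A1 : Y0 → X → Y1 → ℝ) : X → Y1 → ℝ :=
  fun x y1 => ∑ y0, A0 x y0 * A1 y0 x y1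

/-- Sequential composition with independent inputs. -/
def compInd {X Y0 Y1 : Type*} [Fintype Y0] (A0 : X → Y0 → ℝ)
    (A1 : Y0 → X → Y1 → ℝ) : X × X → Y1 → ℝ :=
  fun p y1 => ∑ y0, A0 p.1 y0 * A1 y0 p.2 y1

/-- Post-processing composition. -/
def postProc {X Y Z : Type*} [Fintype Y] (A0 : X → Y → ℝ) (A1 : Y → Z → ℝ) :
    X → Z → ℝ :=
  fun x z => ∑ y, A0 x y * A1 y z

/-- The point distribution at `x`. -/
def pointDist {X : Type*} [DecidableEq X] (x : X) : X → ℝ :=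
  fun x' => if x' = x then 1 else 0

lemma pointDist_isDist {X : Type*} [Fintype X] [DecidableEq X] (x : X) : IsDist (pointDist x) := by
  constructor
  · intro x'; unfold pointDist; split <;> norm_num
  · simp [pointDist]

lemma liftRel_point {X : Type*} [Fintype X] [DecidableEq X] (Φ : Finset (X × X)) {x0 x1 : X}
    (h : (x0, x1) ∈ Φ) : liftRel Φ (pointDist x0) (pointDist x1) := by
  refine ⟨pointDist_isDist x0, pointDist_isDist x1, pointDist (x0, x1), ⟨pointDist_isDist _, ?_, ?_⟩, ?_⟩
  · intro a
    by_cases ha : a = x0 <;>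
      simp [pointDist, Prod.ext_iff, ha, Finset.filter_eq']
  · intro a
    by_cases ha : a = x1 <;>
      simp [pointDist, Prod.ext_iff, ha, Finset.filter_eq']
  · intro p hp
    by_cases hpe : p = (x0, x1)
    · exact hpe ▸ h
    · simp [pointDist, hpe] at hp

lemma liftDist_point {X Y : Type*} [Fintype X] [DecidableEq X] (A : X → Y → ℝ) (x : X) :
    liftDist A (pointDist x) = A x := by
  funext y; simp [liftDist, pointDist]

/-- hockey-stick bound from (ε,δ)-set bounds. -/
lemma hockey {Y : Type*} [Fintype Y] (q q' : Y → ℝ) (ε δ : ℝ)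
    (h : ∀ R : Finset Y, probOf q R ≤ Real.exp ε * probOf q' R + δ) :
    ∑ y, max 0 (q y - Real.exp ε * q' y) ≤ δ := by
  classical
  set S : Finset Y := Finset.univ.filter (fun y => Real.exp ε * q' y < q y) with hS
  have hsum : ∑ y, max 0 (q y - Real.exp ε * q' y) = ∑ y ∈ S, (q y - Real.exp ε * q' y) := by
    rw [← Finset.sum_filter_add_sum_filter_not Finset.univ (fun y => Real.exp ε * q' y < q y)]
    have h1 : ∑ y ∈ S, max 0 (q y - Real.exp ε * q' y) = ∑ y ∈ S, (q y - Real.exp ε * q' y) := by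
      apply Finset.sum_congr rfl; intro y hy
      simp only [hS, Finset.mem_filter] at hy
      exact max_eq_right (by linarith [hy.2])
    have h2 : ∑ y ∈ Finset.univ.filter (fun y => ¬ Real.exp ε * q' y < q y),
        max 0 (q y - Real.exp ε * q' y) = 0 := by
      apply Finset.sum_eq_zero; intro y hy
      simp only [Finset.mem_filter, not_lt] at hy
      exact max_eq_left (by linarith [hy.2])
    rw [h1, h2]; ring
  rw [hsum, Finset.sum_sub_distrib, ← Finset.mul_sum]
  have := h S
  unfold probOf at this
  linarith

lemma probOf_nonneg {Y : Type*} {μ : Y → ℝ} (hμ : ∀ y, 0 ≤ μ y) (R : Finset Y) :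
    0 ≤ probOf μ R := Finset.sum_nonneg (fun y _ => hμ y)

lemma probOf_le_one {Y : Type*} [Fintype Y] {μ : Y → ℝ} (hμ : IsDist μ) (R : Finset Y) :
    probOf μ R ≤ 1 := by
  rw [← hμ.2]
  exact Finset.sum_le_sum_of_subset_of_nonneg (Finset.subset_univ R) (fun y _ _ => hμ.1 y)

lemma probOf_compShared {X Y0 Y1 : Type*} [Fintype Y0] (A0 : X → Y0 → ℝ)
    (A1 : Y0 → X → Y1 → ℝ) (x : X) (R : Finset Y1) :
    probOf (compShared A0 A1 x) R = ∑ y0, A0 x y0 * probOf (A1 y0 x) R := by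
  unfold probOf compShared
  rw [Finset.sum_comm]
  exact Finset.sum_congr rfl (fun y0 _ => (Finset.mul_sum _ _ _).symm)

lemma probOf_liftDist {X Z : Type*} [Fintype X] (M : X → Z → ℝ) (l : X → ℝ) (R : Finset Z) :
    probOf (liftDist M l) R = ∑ x, l x * probOf (M x) R := by
  unfold probOf liftDist
  rw [Finset.sum_comm]
  exact Finset.sum_congr rfl (fun x _ => (Finset.mul_sum _ _ _).symm)

/-- Key pointwise step. -/
lemma key_step {X Y0 Y1 : Type*} [Fintype X] [Fintype Y0] [Fintype Y1]
    (ε0 ε1 δ0 δ1 : ℝ) (hδ1 : 0 ≤ δ1)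
    (Φ : Finset (X × X))
    (A0 : X → Y0 → ℝ) (hA0 : IsMech A0)
    (A1 : Y0 → X → Y1 → ℝ) (hA1 : ∀ y0, IsMech (A1 y0))
    (h0 : DistP A0 (liftRel Φ) ε0 δ0)
    (h1 : ∀ y0, DistP (A1 y0) (liftRel Φ) ε1 δ1)
    {x0 x1 : X} (hx : (x0, x1) ∈ Φ) (R : Finset Y1) :
    probOf (compShared A0 A1 x0) R ≤
      Real.exp (ε0 + ε1) * probOf (compShared A0 A1 x1) R + (δ0 + δ1) := by
  classical
  have hpt : ∀ S : Finset Y0, probOf (A0 x0) S ≤ Real.exp ε0 * probOf (A0 x1) S + δ0 := by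
    intro S
    have := h0 (pointDist x0) (pointDist x1) (liftRel_point Φ hx) S
    rwa [liftDist_point, liftDist_point] at this
  have hhs := hockey (A0 x0) (A0 x1) ε0 δ0 hpt
  have hpt1 : ∀ y0 : Y0, probOf (A1 y0 x0) R ≤ Real.exp ε1 * probOf (A1 y0 x1) R + δ1 := by
    intro y0
    have := h1 y0 (pointDist x0) (pointDist x1) (liftRel_point Φ hx) R
    rwa [liftDist_point, liftDist_point] at this
  set F0 : Y0 → ℝ := fun y0 => probOf (A1 y0 x0) R with hF0
  set F1 : Y0 → ℝ := fun y0 => probOf (A1 y0 x1) R with hF1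
  have hF0nn : ∀ y0, 0 ≤ F0 y0 := fun y0 => probOf_nonneg ((hA1 y0 x0).1) R
  have hF0le : ∀ y0, F0 y0 ≤ 1 := fun y0 => probOf_le_one (hA1 y0 x0) R
  have hF1nn : ∀ y0, 0 ≤ F1 y0 := fun y0 => probOf_nonneg ((hA1 y0 x1).1) R
  rw [probOf_compShared, probOf_compShared]
  set m : Y0 → ℝ := fun y0 => min (A0 x0 y0) (Real.exp ε0 * A0 x1 y0) with hm
  set r : Y0 → ℝ := fun y0 => max 0 (A0 x0 y0 - Real.exp ε0 * A0 x1 y0) with hr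
  have hmr : ∀ y0, A0 x0 y0 = m y0 + r y0 := by
    intro y0; simp only [hm, hr]
    rcases le_total (A0 x0 y0) (Real.exp ε0 * A0 x1 y0) with h | h
    · rw [min_eq_left h, max_eq_left (by linarith)]; ring
    · rw [min_eq_right h, max_eq_right (by linarith)]; ring
  have hmnn : ∀ y0, 0 ≤ m y0 := fun y0 =>
    le_min ((hA0 x0).1 y0) (mul_nonneg (Real.exp_pos ε0).le ((hA0 x1).1 y0))
  have step1 : ∑ y0, A0 x0 y0 * F0 y0 = ∑ y0, m y0 * F0 y0 + ∑ y0, r y0 * F0 y0 := by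
    rw [← Finset.sum_add_distrib]
    exact Finset.sum_congr rfl (fun y0 _ => by rw [hmr y0]; ring)
  have step2 : ∑ y0, r y0 * F0 y0 ≤ δ0 := by
    refine le_trans ?_ hhs
    apply Finset.sum_le_sum; intro y0 _
    calc r y0 * F0 y0 ≤ r y0 * 1 := by
          apply mul_le_mul_of_nonneg_left (hF0le y0) (le_max_left 0 _)
      _ = r y0 := mul_one _
  have step3 : ∑ y0, m y0 * F0 y0 ≤ Real.exp (ε0 + ε1) * ∑ y0, A0 x1 y0 * F1 y0 + δ1 := by
    have hA : ∀ y0, m y0 * F0 y0 ≤ Real.exp (ε0+ε1) * (A0 x1 y0 * F1 y0) + δ1 * A0 x0 y0 := by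
      intro y0
      calc m y0 * F0 y0 ≤ m y0 * (Real.exp ε1 * F1 y0 + δ1) :=
            mul_le_mul_of_nonneg_left (hpt1 y0) (hmnn y0)
        _ = Real.exp ε1 * (m y0 * F1 y0) + δ1 * m y0 := by ring
        _ ≤ Real.exp ε1 * (Real.exp ε0 * A0 x1 y0 * F1 y0) + δ1 * A0 x0 y0 :=
            add_le_add
              (mul_le_mul_of_nonneg_left
                (mul_le_mul_of_nonneg_right (min_le_right _ _) (hF1nn y0)) (Real.exp_pos ε1).le)
              (mul_le_mul_of_nonneg_left (min_le_left _ _) hδ1)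
        _ = Real.exp (ε0+ε1) * (A0 x1 y0 * F1 y0) + δ1 * A0 x0 y0 := by
            rw [Real.exp_add]; ring
    calc ∑ y0, m y0 * F0 y0 ≤ ∑ y0, (Real.exp (ε0+ε1) * (A0 x1 y0 * F1 y0) + δ1 * A0 x0 y0) :=
          Finset.sum_le_sum (fun y0 _ => hA y0)
      _ = Real.exp (ε0+ε1) * ∑ y0, A0 x1 y0 * F1 y0 + δ1 * ∑ y0, A0 x0 y0 := by
          rw [Finset.sum_add_distrib, ← Finset.mul_sum, ← Finset.mul_sum]
      _ = Real.exp (ε0+ε1) * ∑ y0, A0 x1 y0 * F1 y0 + δ1 := by rw [(hA0 x0).2, mul_one]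
  linarith [step1, step2, step3]

/-- sequential composition (shared input) of DistP mechanisms. -/
theorem seq_comp_distP {X Y0 Y1 : Type*} [Fintype X] [Fintype Y0] [Fintype Y1]
    [Nonempty X] [Nonempty Y0] [Nonempty Y1]
    (ε0 ε1 δ0 δ1 : ℝ) (hε0 : 0 ≤ ε0) (hε1 : 0 ≤ ε1)
    (hδ0 : 0 ≤ δ0) (hδ0' : δ0 ≤ 1) (hδ1 : 0 ≤ δ1) (hδ1' : δ1 ≤ 1)
    (Φ : Finset (X × X))
    (A0 : X → Y0 → ℝ) (hA0 : IsMech A0)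
    (A1 : Y0 → X → Y1 → ℝ) (hA1 : ∀ y0, IsMech (A1 y0))
    (h0 : DistP A0 (liftRel Φ) ε0 δ0)
    (h1 : ∀ y0, DistP (A1 y0) (liftRel Φ) ε1 δ1) :
    DistP (compShared A0 A1) (liftRel Φ) (ε0 + ε1) ((δ0 + δ1) * (Φ.card : ℝ)) := by
  classical
  intro l0 l1 hrel R
  obtain ⟨hl0, hl1, γ, ⟨⟨hγnn, hγsum⟩, hm0, hm1⟩, hsupp⟩ := hrel
  set g : X → ℝ := fun x => probOf (compShared A0 A1 x) R with hg
  have key : ∀ p : X × X, p ∈ Φ → g p.1 ≤ Real.exp (ε0 + ε1) * g p.2 + (δ0 + δ1) := by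
    intro p hp
    exact key_step ε0 ε1 δ0 δ1 hδ1 Φ A0 hA0 A1 hA1 h0 h1 (by rwa [Prod.mk.eta] : (p.1, p.2) ∈ Φ) R
  have P0 : probOf (liftDist (compShared A0 A1) l0) R = ∑ p : X × X, γ p * g p.1 := by
    rw [probOf_liftDist, Fintype.sum_prod_type]
    exact Finset.sum_congr rfl fun x0 _ => by rw [hm0 x0, Finset.sum_mul]
  have P1 : probOf (liftDist (compShared A0 A1) l1) R = ∑ p : X × X, γ p * g p.2 := by
    rw [probOf_liftDist, Fintype.sum_prod_type_right]
    exact Finset.sum_congr rfl fun x1 _ => by rw [hm1 x1, Finset.sum_mul]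
  have hterm : ∀ p : X × X, γ p * g p.1 ≤ γ p * (Real.exp (ε0 + ε1) * g p.2 + (δ0 + δ1)) := by
    intro p
    rcases (hγnn p).lt_or_eq with hpos | hzero
    · exact mul_le_mul_of_nonneg_left (key p (hsupp p hpos)) (hγnn p)
    · rw [← hzero]; simp
  have hΦne : (1 : ℝ) ≤ (Φ.card : ℝ) := by
    have : ∃ p, 0 < γ p := by
      by_contra hcon
      push_neg at hcon
      have : ∑ p : X × X, γ p = 0 :=
        Finset.sum_eq_zero fun p _ => le_antisymm (hcon p) (hγnn p)
      rw [hγsum] at this; norm_num at this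
    obtain ⟨p, hp⟩ := this
    have : Φ.Nonempty := ⟨p, hsupp p hp⟩
    exact_mod_cast Finset.card_pos.mpr this
  calc probOf (liftDist (compShared A0 A1) l0) R
      = ∑ p : X × X, γ p * g p.1 := P0
    _ ≤ ∑ p : X × X, γ p * (Real.exp (ε0 + ε1) * g p.2 + (δ0 + δ1)) :=
        Finset.sum_le_sum fun p _ => hterm p
    _ = Real.exp (ε0 + ε1) * ∑ p : X × X, γ p * g p.2 + (δ0 + δ1) * ∑ p : X × X, γ p := by
        rw [Finset.mul_sum, Finset.mul_sum, ← Finset.sum_add_distrib]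
        exact Finset.sum_congr rfl fun p _ => by ring
    _ = Real.exp (ε0 + ε1) * probOf (liftDist (compShared A0 A1) l1) R + (δ0 + δ1) := by
        rw [P1, hγsum, mul_one]
    _ ≤ Real.exp (ε0 + ε1) * probOf (liftDist (compShared A0 A1) l1) R
        + (δ0 + δ1) * (Φ.card : ℝ) := by
        have := le_mul_of_one_le_right (by linarith : (0:ℝ) ≤ δ0 + δ1) hΦne
        linarith
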